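/- arXiv:2504.17687 — 2 statements merged into one kernel-verified Lean document; each statement's English description precedes it below -/
import Mathlib

section
/- Let f ∈ ℤ_p{x} be a nonzero restricted power series such that f and f' have no common zero in ℤ_p. Then there exists N such that for all D ≥ N, Z_{f_D}(s) = Z_f(s) for all s > 0, where f_D is the truncation of f at degree D. -/
/-!
Write `f_D` for the truncations of `f`. Since the coefficients tend to `0`, `f_D → f` and
`f_D' → f'` uniformly on `ℤ_p`, and by compactness `max ‖f‖ ‖f'‖ ≥ ε > 0`. Cut `ℤ_p` into the
balls of radius `r = p^{-n} < ε`, the fibres of `ℤ_p → ℤ/p^n`. On a ball where `f` has no zero,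
`‖f‖` is bounded below, so eventually `‖f_D‖ = ‖f‖` pointwise. On a ball containing a zero `x₀`
of `f` we have `‖f'(x₀)‖ > r`, and the Taylor estimate
`‖f x - f y - f' y * (x - y)‖ ≤ ‖x - y‖ ^ 2` gives `‖f x‖ = ‖f'(x₀)‖ * ‖x - x₀‖` on the ball.
Hensel's lemma produces a zero `z` of `f_D` in the same ball, where likewise
`‖f_D x‖ = ‖f'(x₀)‖ * ‖x - z‖`; the two integrals over the ball then agree by translation
invariance of the Haar measure.
-/

open MeasureTheory Filter Metric Topology

theorem IsUltrametricDist.norm_eq_of_norm_sub_lt {S : Type*} [SeminormedAddGroup S]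
    [IsUltrametricDist S] {u v : S} (h : ‖u - v‖ < ‖v‖) : ‖u‖ = ‖v‖ := by
  rw [← sub_add_cancel u v, IsUltrametricDist.norm_add_eq_max_of_norm_ne_norm h.ne,
    max_eq_right h.le]

theorem sub_sq_dvd_pow_succ_sub_pow_succ_sub {R : Type*} [CommRing R] (x y : R) (m : ℕ) :
    (x - y) ^ 2 ∣ x ^ (m + 1) - y ^ (m + 1) - (m + 1) * y ^ m * (x - y) := by
  induction m with
  | zero => exact ⟨0, by ring⟩
  | succ m ih =>
    obtain ⟨h, ih⟩ := ih
    refine ⟨(m + 1) * y ^ m + x * h, ?_⟩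
    push_cast
    linear_combination x * ih

theorem setIntegral_closedBall_comp_sub {G E : Type*} [NormedAddCommGroup G] [MeasurableSpace G]
    [MeasurableAdd G] [NormedAddCommGroup E] [NormedSpace ℝ E] (μ : Measure G)
    [μ.IsAddRightInvariant] (F : G → E) (z : G) (r : ℝ) :
    ∫ x in closedBall z r, F (x - z) ∂μ = ∫ x in closedBall 0 r, F x ∂μ := by
  have h : (· - z) ⁻¹' closedBall 0 r = closedBall z r := by
    ext x; simp [dist_eq_norm]
  rw [← h]
  exact (measurePreserving_sub_right μ z).setIntegral_preimage_emb
    (measurableEmbedding_subRight z) F _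

theorem integral_eq_sum_setIntegral_preimage {X ι E : Type*} [MeasurableSpace X] [Fintype ι]
    [NormedAddCommGroup E] [NormedSpace ℝ E] {μ : Measure X} (π : X → ι)
    (hπ : ∀ i, MeasurableSet (π ⁻¹' {i})) {F : X → E} (hF : Integrable F μ) :
    ∫ x, F x ∂μ = ∑ i, ∫ x in π ⁻¹' {i}, F x ∂μ := by
  rw [← integral_iUnion_fintype hπ (fun i j hij => Set.disjoint_singleton.2 hij |>.preimage π)
    fun i => hF.integrableOn, ← Set.preimage_iUnion, Set.iUnion_of_singleton, Set.preimage_univ,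
    setIntegral_univ]

namespace PadicInt

variable {p : ℕ} [Fact p.Prime]

theorem exists_preimage_toZModPow_eq_closedBall (n : ℕ) (i : ZMod (p ^ n)) :
    ∃ x, toZModPow n ⁻¹' {i} = closedBall x ((p : ℝ) ^ (-(n : ℤ))) := by
  obtain ⟨x, rfl⟩ := ZMod.ringHom_surjective (toZModPow n) i
  refine ⟨x, Set.ext fun y => ?_⟩
  rw [mem_closedBall, dist_eq_norm, norm_le_pow_iff_mem_span_pow, ← ker_toZModPow,
    RingHom.sub_mem_ker_iff, Set.mem_preimage, Set.mem_singleton_iff]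

end PadicInt

namespace RestrictedPowerSeries

noncomputable def eval {R : Type*} [Semiring R] [TopologicalSpace R] (b : ℕ → R) (x : R) : R :=
  ∑' i, b i * x ^ i

def derivCoeff {R : Type*} [Semiring R] (b : ℕ → R) (i : ℕ) : R := ((i + 1 : ℕ) : R) * b (i + 1)

noncomputable def truncPoly {R : Type*} [Semiring R] (b : ℕ → R) (D : ℕ) : Polynomial R :=
  ∑ i ∈ Finset.range (D + 1), Polynomial.C (b i) * Polynomial.X ^ i

section Polynomial

variable {R : Type*} [CommSemiring R]

theorem eval_coeff [TopologicalSpace R] [T2Space R] (Q : Polynomial R) (x : R) :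
    eval Q.coeff x = Q.eval x := by
  rw [eval, Polynomial.eval_eq_sum_range, tsum_eq_sum fun i hi => ?_]
  rw [Finset.mem_range, not_lt] at hi
  rw [Polynomial.coeff_eq_zero_of_natDegree_lt (Nat.lt_of_succ_le hi), zero_mul]

theorem derivCoeff_coeff (Q : Polynomial R) : derivCoeff Q.coeff = Q.derivative.coeff := by
  ext i
  rw [derivCoeff, Polynomial.coeff_derivative, mul_comm]
  push_cast
  rfl

theorem tendsto_coeff [TopologicalSpace R] (Q : Polynomial R) : Tendsto Q.coeff atTop (𝓝 0) :=
  tendsto_const_nhds.congr' <| (eventually_gt_atTop Q.natDegree).mono fun _ hi =>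
    (Polynomial.coeff_eq_zero_of_natDegree_lt hi).symm

theorem coeff_truncPoly (b : ℕ → R) (D i : ℕ) :
    (truncPoly b D).coeff i = if i ≤ D then b i else 0 := by
  simp [truncPoly, Polynomial.finsetSum_coeff]

theorem eval_truncPoly (b : ℕ → R) (D : ℕ) (x : R) :
    (truncPoly b D).eval x = ∑ i ∈ Finset.range (D + 1), b i * x ^ i := by
  simp [truncPoly, Polynomial.eval_finsetSum]

end Polynomial

variable {p : ℕ} [Fact p.Prime] {b c : ℕ → ℤ_[p]}

theorem summable_mul_pow (hb : Tendsto b atTop (𝓝 0)) (x : ℤ_[p]) :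
    Summable fun i => b i * x ^ i := by
  apply NonarchimedeanAddGroup.summable_of_tendsto_cofinite_zero
  rw [Nat.cofinite_eq_atTop, tendsto_zero_iff_norm_tendsto_zero]
  refine squeeze_zero (fun i => norm_nonneg _) (fun i => ?_) (tendsto_norm_zero.comp hb)
  rw [norm_mul]
  exact mul_le_of_le_one_right (norm_nonneg _) (PadicInt.norm_le_one _)

theorem eval_sub (hb : Tendsto b atTop (𝓝 0)) (hc : Tendsto c atTop (𝓝 0)) (x : ℤ_[p]) :
    eval (b - c) x = eval b x - eval c x := by
  simp only [eval, Pi.sub_apply, sub_mul]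
  exact (summable_mul_pow hb x).tsum_sub (summable_mul_pow hc x)

theorem norm_eval_le {C : ℝ} (hC : 0 ≤ C) (h : ∀ i, ‖b i‖ ≤ C) (x : ℤ_[p]) : ‖eval b x‖ ≤ C :=
  IsUltrametricDist.norm_tsum_le_of_forall_le_of_nonneg hC fun i => by
    rw [norm_mul]
    exact (mul_le_of_le_one_right (norm_nonneg _) (PadicInt.norm_le_one _)).trans (h i)

theorem norm_derivCoeff_le (b : ℕ → ℤ_[p]) (i : ℕ) : ‖derivCoeff b i‖ ≤ ‖b (i + 1)‖ := by
  rw [derivCoeff, norm_mul]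
  exact mul_le_of_le_one_left (norm_nonneg _) (PadicInt.norm_le_one _)

theorem tendsto_derivCoeff (hb : Tendsto b atTop (𝓝 0)) :
    Tendsto (derivCoeff b) atTop (𝓝 0) := by
  rw [tendsto_zero_iff_norm_tendsto_zero] at hb ⊢
  exact squeeze_zero (fun i => norm_nonneg _) (norm_derivCoeff_le b)
    (hb.comp (tendsto_add_atTop_nat 1))

theorem norm_eval_sub_eval_le (hb : Tendsto b atTop (𝓝 0)) (x y : ℤ_[p]) :
    ‖eval b x - eval b y‖ ≤ ‖x - y‖ := by
  rw [eval, eval, ← (summable_mul_pow hb x).tsum_sub (summable_mul_pow hb y)]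
  refine IsUltrametricDist.norm_tsum_le_of_forall_le_of_nonneg (norm_nonneg _) fun i => ?_
  obtain ⟨k, hk⟩ := sub_dvd_pow_sub_pow x y i
  rw [← mul_sub, hk, norm_mul, norm_mul]
  calc ‖b i‖ * (‖x - y‖ * ‖k‖) ≤ 1 * (‖x - y‖ * 1) := by gcongr <;> exact PadicInt.norm_le_one _
    _ = ‖x - y‖ := by ring

theorem continuous_eval (hb : Tendsto b atTop (𝓝 0)) : Continuous (eval b) :=
  (LipschitzWith.of_dist_le_mul (K := 1) fun x y => by
    simpa [dist_eq_norm] using norm_eval_sub_eval_le hb x y).continuous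

theorem norm_eval_sub_eval_sub_le (hb : Tendsto b atTop (𝓝 0)) (x y : ℤ_[p]) :
    ‖eval b x - eval b y - eval (derivCoeff b) y * (x - y)‖ ≤ ‖x - y‖ ^ 2 := by
  have hsub : Summable fun i => b i * x ^ i - b i * y ^ i :=
    (summable_mul_pow hb x).sub (summable_mul_pow hb y)
  have hd := summable_mul_pow (tendsto_derivCoeff hb) y
  have hshift :
      eval b x - eval b y = ∑' i, (b (i + 1) * x ^ (i + 1) - b (i + 1) * y ^ (i + 1)) := by
    rw [eval, eval, ← (summable_mul_pow hb x).tsum_sub (summable_mul_pow hb y),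
      hsub.tsum_eq_zero_add]
    simp
  rw [hshift, eval, ← hd.tsum_mul_right, ← ((summable_nat_add_iff 1).2 hsub).tsum_sub
    (hd.mul_right _)]
  refine IsUltrametricDist.norm_tsum_le_of_forall_le_of_nonneg (by positivity) fun i => ?_
  obtain ⟨k, hk⟩ := sub_sq_dvd_pow_succ_sub_pow_succ_sub x y i
  have hterm : b (i + 1) * x ^ (i + 1) - b (i + 1) * y ^ (i + 1) - derivCoeff b i * y ^ i * (x - y)
      = b (i + 1) * ((x - y) ^ 2 * k) := by
    rw [← hk, derivCoeff]
    push_cast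
    ring
  rw [hterm, norm_mul, norm_mul, norm_pow]
  calc ‖b (i + 1)‖ * (‖x - y‖ ^ 2 * ‖k‖) ≤ 1 * (‖x - y‖ ^ 2 * 1) := by
        gcongr <;> exact PadicInt.norm_le_one _
    _ = ‖x - y‖ ^ 2 := by ring

theorem norm_eval_eq_of_eval_eq_zero (hb : Tendsto b atTop (𝓝 0)) {x z : ℤ_[p]}
    (hz : eval b z = 0) (hx : ‖x - z‖ < ‖eval (derivCoeff b) z‖) :
    ‖eval b x‖ = ‖eval (derivCoeff b) z‖ * ‖x - z‖ := by
  rcases eq_or_ne x z with rfl | hxz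
  · simp [hz]
  rw [← norm_mul]
  refine IsUltrametricDist.norm_eq_of_norm_sub_lt ?_
  have htaylor := norm_eval_sub_eval_sub_le hb x z
  rw [hz, sub_zero] at htaylor
  refine htaylor.trans_lt ?_
  rw [norm_mul, sq]
  exact mul_lt_mul_of_pos_right hx (norm_pos_iff.2 (sub_ne_zero.2 hxz))

theorem tendstoUniformly_eval {ι : Type*} {l : Filter ι} {bs : ι → ℕ → ℤ_[p]}
    (hb : Tendsto b atTop (𝓝 0)) (hbs : ∀ D, Tendsto (bs D) atTop (𝓝 0))
    (h : TendstoUniformly bs b l) : TendstoUniformly (fun D => eval (bs D)) (eval b) l := by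
  rw [Metric.tendstoUniformly_iff] at h ⊢
  intro τ hτ
  filter_upwards [h (τ / 2) (half_pos hτ)] with D hD x
  rw [dist_eq_norm, ← eval_sub hb (hbs D)]
  refine (norm_eval_le (half_pos hτ).le (fun i => ?_) x).trans_lt (half_lt_self hτ)
  rw [Pi.sub_apply, ← dist_eq_norm]
  exact (hD i).le

theorem tendstoUniformly_derivCoeff {ι : Type*} {l : Filter ι} {bs : ι → ℕ → ℤ_[p]}
    (h : TendstoUniformly bs b l) :
    TendstoUniformly (fun D => derivCoeff (bs D)) (derivCoeff b) l := by
  rw [Metric.tendstoUniformly_iff] at h ⊢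
  intro τ hτ
  filter_upwards [h τ hτ] with D hD i
  calc dist (derivCoeff b i) (derivCoeff (bs D) i) = ‖derivCoeff (b - bs D) i‖ := by
        simp [dist_eq_norm, derivCoeff, mul_sub]
    _ ≤ dist (b (i + 1)) (bs D (i + 1)) := norm_derivCoeff_le _ _
    _ < τ := hD (i + 1)

theorem tendstoUniformly_coeff_truncPoly (hb : Tendsto b atTop (𝓝 0)) :
    TendstoUniformly (fun D => (truncPoly b D).coeff) b atTop := by
  rw [Metric.tendstoUniformly_iff]
  intro τ hτ
  obtain ⟨N, hN⟩ := eventually_atTop.1 (hb.eventually (ball_mem_nhds 0 hτ))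
  filter_upwards [eventually_ge_atTop N] with D hD i
  rw [coeff_truncPoly]
  split_ifs with hi
  · simpa using hτ
  · simpa [dist_comm] using hN i (by omega)

theorem tendstoUniformly_eval_truncPoly (hb : Tendsto b atTop (𝓝 0)) :
    TendstoUniformly (fun D x => (truncPoly b D).eval x) (eval b) atTop := by
  simp_rw [← eval_coeff]
  exact tendstoUniformly_eval hb (fun D => tendsto_coeff _) (tendstoUniformly_coeff_truncPoly hb)

theorem tendstoUniformly_derivative_eval_truncPoly (hb : Tendsto b atTop (𝓝 0)) :
    TendstoUniformly (fun D x => (truncPoly b D).derivative.eval x) (eval (derivCoeff b))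
      atTop := by
  simp_rw [← eval_coeff, ← derivCoeff_coeff]
  exact tendstoUniformly_eval (tendsto_derivCoeff hb)
    (fun D => tendsto_derivCoeff (tendsto_coeff _))
    (tendstoUniformly_derivCoeff (tendstoUniformly_coeff_truncPoly hb))

variable [MeasurableSpace ℤ_[p]] [BorelSpace ℤ_[p]] (μ : Measure ℤ_[p]) [μ.IsAddRightInvariant]

theorem setIntegral_closedBall_norm_rpow_eq_of_eval_eq_zero (hb : Tendsto b atTop (𝓝 0))
    (Q : Polynomial ℤ_[p]) {x₀ : ℤ_[p]} {r : ℝ} (hr : 0 ≤ r) (hx₀ : eval b x₀ = 0)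
    (hrx₀ : r < ‖eval (derivCoeff b) x₀‖)
    (hQ : ‖Q.eval x₀‖ < ‖eval (derivCoeff b) x₀‖ * r)
    (hQ' : ‖Q.derivative.eval x₀ - eval (derivCoeff b) x₀‖ < ‖eval (derivCoeff b) x₀‖)
    (s : ℝ) :
    ∫ x in closedBall x₀ r, ‖Q.eval x‖ ^ s ∂μ = ∫ x in closedBall x₀ r, ‖eval b x‖ ^ s ∂μ := by
  set d := ‖eval (derivCoeff b) x₀‖
  have hd : 0 < d := hr.trans_lt hrx₀
  have hQderiv : ‖Q.derivative.eval x₀‖ = d := IsUltrametricDist.norm_eq_of_norm_sub_lt hQ'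
  obtain ⟨z, hQz, hzx₀, hQ'z, -⟩ := hensels_lemma (F := Q) (a := x₀) (by
    simp only [Polynomial.coe_aeval_eq_eval, hQderiv]
    nlinarith)
  simp only [Polynomial.coe_aeval_eq_eval, hQderiv] at hQz hzx₀ hQ'z
  have hQnorm : ∀ x, ‖x - z‖ < d → ‖Q.eval x‖ = d * ‖x - z‖ := fun x hx => by
    have h := norm_eval_eq_of_eval_eq_zero (tendsto_coeff Q) (x := x) (z := z)
    simp only [eval_coeff, derivCoeff_coeff, hQ'z] at h
    exact h hQz hx
  have hz : z ∈ closedBall x₀ r := by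
    rw [mem_closedBall_iff_norm', ← mul_le_mul_iff_right₀ hd, ← hQnorm x₀ (by rwa [norm_sub_rev])]
    exact hQ.le
  calc ∫ x in closedBall x₀ r, ‖Q.eval x‖ ^ s ∂μ
      = ∫ x in closedBall z r, (d * ‖x - z‖) ^ s ∂μ := by
        rw [IsUltrametricDist.closedBall_eq_of_mem hz]
        refine setIntegral_congr_fun measurableSet_closedBall fun x hx => ?_
        rw [hQnorm x ((mem_closedBall_iff_norm.1 hx).trans_lt hrx₀)]
    _ = ∫ x in closedBall x₀ r, (d * ‖x - x₀‖) ^ s ∂μ := by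
        rw [setIntegral_closedBall_comp_sub μ (fun y => (d * ‖y‖) ^ s),
          setIntegral_closedBall_comp_sub μ (fun y => (d * ‖y‖) ^ s)]
    _ = ∫ x in closedBall x₀ r, ‖eval b x‖ ^ s ∂μ := by
        refine setIntegral_congr_fun measurableSet_closedBall fun x hx => ?_
        rw [norm_eval_eq_of_eval_eq_zero hb hx₀ ((mem_closedBall_iff_norm.1 hx).trans_lt hrx₀)]

theorem eventually_setIntegral_closedBall_truncPoly_eq (hb : Tendsto b atTop (𝓝 0)) {y : ℤ_[p]}
    {r : ℝ} (hr : 0 < r)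
    (hsimple : ∀ x ∈ closedBall y r, eval b x = 0 → r < ‖eval (derivCoeff b) x‖) :
    ∀ᶠ D in atTop, ∀ s : ℝ, ∫ x in closedBall y r, ‖(truncPoly b D).eval x‖ ^ s ∂μ =
      ∫ x in closedBall y r, ‖eval b x‖ ^ s ∂μ := by
  have hU := Metric.tendstoUniformly_iff.1 (tendstoUniformly_eval_truncPoly hb)
  by_cases hzero : ∃ x₀ ∈ closedBall y r, eval b x₀ = 0
  · obtain ⟨x₀, hx₀, hbx₀⟩ := hzero
    have hrx₀ := hsimple x₀ hx₀ hbx₀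
    have hd : 0 < ‖eval (derivCoeff b) x₀‖ := hr.trans hrx₀
    have hderiv := (tendstoUniformly_derivative_eval_truncPoly hb).tendsto_at x₀
    filter_upwards [hU _ (mul_pos hd hr), Metric.tendsto_nhds.1 hderiv _ hd] with D hD hD' s
    rw [IsUltrametricDist.closedBall_eq_of_mem hx₀]
    refine setIntegral_closedBall_norm_rpow_eq_of_eval_eq_zero μ hb _ hr.le hbx₀ hrx₀ ?_ ?_ s
    · simpa [dist_eq_norm, hbx₀] using hD x₀
    · simpa [dist_eq_norm] using hD'
  · push Not at hzero
    obtain ⟨δ, hδ, hδle⟩ := isClosed_closedBall.isCompact.exists_forall_le'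
      (continuous_eval hb).norm.continuousOn fun x hx => norm_pos_iff.2 (hzero x hx)
    filter_upwards [hU δ hδ] with D hD s
    refine setIntegral_congr_fun measurableSet_closedBall fun x hx => ?_
    have hclose : ‖(truncPoly b D).eval x - eval b x‖ < ‖eval b x‖ := by
      rw [← dist_eq_norm']
      exact (hD x).trans_le (hδle x hx)
    rw [IsUltrametricDist.norm_eq_of_norm_sub_lt hclose]

end RestrictedPowerSeries

open RestrictedPowerSeries in
theorem stmt_15_general (p : ℕ) [Fact p.Prime]
    [MeasurableSpace ℤ_[p]] [BorelSpace ℤ_[p]]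
    (μ : Measure ℤ_[p]) [μ.IsAddHaarMeasure]
    (a : ℕ → ℤ_[p]) (ha : Tendsto a atTop (nhds 0))
    (hnd : ∀ x : ℤ_[p], ¬ ((∑' i : ℕ, a i * x ^ i) = 0 ∧
      (∑' i : ℕ, ((i + 1 : ℕ) : ℤ_[p]) * a (i + 1) * x ^ i) = 0)) :
    ∃ N : ℕ, ∀ D : ℕ, N ≤ D → ∀ s : ℝ, 0 < s →
      (∫ x : ℤ_[p], ‖∑ i ∈ Finset.range (D + 1), a i * x ^ i‖ ^ s ∂μ)
        = ∫ x : ℤ_[p], ‖∑' i : ℕ, a i * x ^ i‖ ^ s ∂μ := by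
  obtain ⟨ε, hε, hεle⟩ := isCompact_univ.exists_forall_le'
    ((continuous_eval ha).prodMk (continuous_eval (tendsto_derivCoeff ha))).norm.continuousOn
    fun x _ => norm_pos_iff.2 fun h => hnd x (Prod.ext_iff.1 h)
  obtain ⟨n, hn⟩ := PadicInt.exists_pow_neg_lt p hε
  have hball : ∀ i, ∀ᶠ D in atTop, ∀ s : ℝ,
      ∫ x in PadicInt.toZModPow n ⁻¹' {i}, ‖(truncPoly a D).eval x‖ ^ s ∂μ =
        ∫ x in PadicInt.toZModPow n ⁻¹' {i}, ‖eval a x‖ ^ s ∂μ := by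
    intro i
    obtain ⟨c, hc⟩ := PadicInt.exists_preimage_toZModPow_eq_closedBall n i
    rw [hc]
    refine eventually_setIntegral_closedBall_truncPoly_eq μ ha
      (zpow_pos (mod_cast (Fact.out : p.Prime).pos) _) fun x _ hx => hn.trans_le ?_
    simpa [Prod.norm_def, hx] using hεle x trivial
  obtain ⟨N, hN⟩ := eventually_atTop.1 (eventually_all.2 hball)
  refine ⟨N, fun D hD s hs => ?_⟩
  have hmeas : ∀ i, MeasurableSet (PadicInt.toZModPow (p := p) n ⁻¹' {i}) := fun i => by
    obtain ⟨c, hc⟩ := PadicInt.exists_preimage_toZModPow_eq_closedBall n i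
    exact hc ▸ measurableSet_closedBall
  have hint : ∀ g : ℤ_[p] → ℤ_[p], Continuous g → Integrable (fun x => ‖g x‖ ^ s) μ :=
    fun g hg => (hg.norm.rpow_const fun _ => Or.inr hs.le).integrable_of_hasCompactSupport
      (HasCompactSupport.of_compactSpace _)
  simp_rw [← eval_truncPoly]
  change _ = ∫ x, ‖eval a x‖ ^ s ∂μ
  rw [integral_eq_sum_setIntegral_preimage _ hmeas (hint _ (Polynomial.continuous _)),
    integral_eq_sum_setIntegral_preimage _ hmeas (hint _ (continuous_eval ha))]
  exact Finset.sum_congr rfl fun i _ => hN D hD i s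

/-- If a nonzero restricted power series `f` (coefficients `a i → 0`,
`f x = ∑' i, a i * x ^ i`, derivative `f' x = ∑' i, (i+1) * a (i+1) * x ^ i`) has no
common zero with its derivative on `ℤ_p`, then the Igusa zeta functions of the
truncations `f_D` eventually all agree with that of `f`. -/
theorem stmt_15 (p : ℕ) [Fact p.Prime]
    [MeasurableSpace ℤ_[p]] [BorelSpace ℤ_[p]]
    (μ : Measure ℤ_[p]) [μ.IsAddHaarMeasure] (hμ : μ Set.univ = 1)
    (a : ℕ → ℤ_[p]) (ha : Tendsto a atTop (nhds 0))
    (hfne : ∃ i, a i ≠ 0)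
    (hnd : ∀ x : ℤ_[p], ¬ ((∑' i : ℕ, a i * x ^ i) = 0 ∧
      (∑' i : ℕ, ((i + 1 : ℕ) : ℤ_[p]) * a (i + 1) * x ^ i) = 0)) :
    ∃ N : ℕ, ∀ D : ℕ, N ≤ D → ∀ s : ℝ, 0 < s →
      (∫ x : ℤ_[p], ‖∑ i ∈ Finset.range (D + 1), a i * x ^ i‖ ^ s ∂μ)
        = ∫ x : ℤ_[p], ‖∑' i : ℕ, a i * x ^ i‖ ^ s ∂μ :=
  stmt_15_general p μ a ha hnd
end

section
/- A nonzero restricted power series f ∈ ℤ_p{x} has only finitely many zeros in ℤ_p. -/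
/-!
By compactness of `ℤ_[p]`, an infinite zero set of `f x = ∑ aᵢ xⁱ` has an accumulation point `s`.
Expanding `f (s + y) = ∑ⱼ dⱼ yʲ` with `dⱼ = ∑ₖ C(j + k, j) a_{j+k} sᵏ` gives again a restricted
power series, and by the ultrametric inequality a restricted power series whose lowest nonzero
coefficient is `d_m` has no zero `y` with `0 < ‖y‖ < ‖d_m‖`. Hence the zeros of `f` are isolated,
unless all `dⱼ` vanish; but then `f` vanishes identically, which is impossible by the same argument
applied at `0`.
-/

open Filter Topology

lemma summable_of_norm_le_of_tendsto {ι G : Type*} [NormedAddCommGroup G] [IsUltrametricDist G]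
    [CompleteSpace G] {f : ι → G} {u : ι → ℝ} (hf : ∀ i, ‖f i‖ ≤ u i)
    (hu : Tendsto u cofinite (𝓝 0)) : Summable f :=
  NonarchimedeanAddGroup.summable_of_tendsto_cofinite_zero (squeeze_zero_norm hf hu)

lemma tendsto_fst_add_snd_cofinite_atTop :
    Tendsto (fun q : ℕ × ℕ ↦ q.1 + q.2) cofinite atTop :=
  tendsto_atTop.2 fun b ↦ ((Set.finite_Iio b).prod (Set.finite_Iio b)).subset
    fun q (hq : ¬b ≤ q.1 + q.2) ↦ by
      simp only [Set.mem_prod, Set.mem_Iio]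
      omega

open Finset in
lemma mul_add_pow_eq_sum_antidiagonal {R : Type*} [CommSemiring R] (a : ℕ → R) (s y : R)
    (n : ℕ) :
    a n * (s + y) ^ n = ∑ q ∈ antidiagonal n,
      a (q.1 + q.2) * ((q.1 + q.2).choose q.1 : R) * s ^ q.2 * y ^ q.1 := by
  rw [add_comm s y, (Commute.all y s).add_pow', mul_sum]
  refine sum_congr rfl fun q hq ↦ ?_
  rw [mem_antidiagonal.1 hq, nsmul_eq_mul]
  ring

namespace PadicInt

variable {p : ℕ} [Fact p.Prime]

instance nhdsNE_neBot (x : ℤ_[p]) : (𝓝[≠] x).NeBot := by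
  rw [← mem_closure_iff_nhdsWithin_neBot, Metric.mem_closure_iff]
  intro ε hε
  obtain ⟨k, hk⟩ := exists_pow_neg_lt p hε
  refine ⟨x + (p : ℤ_[p]) ^ k, ?_, ?_⟩
  · simp [(Fact.out : p.Prime).ne_zero]
  · rwa [dist_eq_norm, sub_add_cancel_left, norm_neg, norm_p_pow]

lemma norm_mul_le_norm_left (c x : ℤ_[p]) : ‖c * x‖ ≤ ‖c‖ := by
  rw [norm_mul]
  exact mul_le_of_le_one_right (norm_nonneg c) (norm_le_one x)

lemma norm_mul_le_norm_right (c x : ℤ_[p]) : ‖c * x‖ ≤ ‖x‖ := by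
  rw [norm_mul]
  exact mul_le_of_le_one_left (norm_nonneg x) (norm_le_one c)

lemma summable_mul_pow {a : ℕ → ℤ_[p]} (ha : Tendsto a atTop (𝓝 0)) (x : ℤ_[p]) :
    Summable fun i ↦ a i * x ^ i :=
  summable_of_norm_le_of_tendsto (fun i ↦ norm_mul_le_norm_left _ _)
    (by simpa [Nat.cofinite_eq_atTop] using ha.norm)

noncomputable def taylorCoeff (a : ℕ → ℤ_[p]) (s : ℤ_[p]) (j : ℕ) : ℤ_[p] :=
  ∑' k, a (j + k) * ((j + k).choose j : ℤ_[p]) * s ^ k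

lemma norm_taylorCoeff_term_le (a : ℕ → ℤ_[p]) (s : ℤ_[p]) (j k : ℕ) :
    ‖a (j + k) * ((j + k).choose j : ℤ_[p]) * s ^ k‖ ≤ ‖a (j + k)‖ :=
  (norm_mul_le_norm_left _ _).trans (norm_mul_le_norm_left _ _)

lemma tendsto_taylorCoeff {a : ℕ → ℤ_[p]} (ha : Tendsto a atTop (𝓝 0)) (s : ℤ_[p]) :
    Tendsto (taylorCoeff a s) atTop (𝓝 0) := by
  refine NormedAddGroup.tendsto_nhds_zero.2 fun ε hε ↦ ?_
  obtain ⟨N, hN⟩ := eventually_atTop.1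
    (NormedAddGroup.tendsto_nhds_zero.1 ha (ε / 2) (half_pos hε))
  refine eventually_atTop.2 ⟨N, fun j hj ↦ ?_⟩
  calc ‖taylorCoeff a s j‖ ≤ ε / 2 :=
        IsUltrametricDist.norm_tsum_le_of_forall_le_of_nonneg (half_pos hε).le fun k ↦
          (norm_taylorCoeff_term_le a s j k).trans (hN _ (by omega)).le
    _ < ε := half_lt_self hε

lemma hasSum_taylorCoeff_mul_pow {a : ℕ → ℤ_[p]} (ha : Tendsto a atTop (𝓝 0)) (s y : ℤ_[p]) :
    HasSum (fun j ↦ taylorCoeff a s j * y ^ j) (∑' i, a i * (s + y) ^ i) := by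
  set g : ℕ × ℕ → ℤ_[p] := fun q ↦ a (q.1 + q.2) * ((q.1 + q.2).choose q.1 : ℤ_[p]) * s ^ q.2
  have h_diag : Tendsto (fun q : ℕ × ℕ ↦ ‖a (q.1 + q.2)‖) cofinite (𝓝 0) := by
    simpa using (ha.comp tendsto_fst_add_snd_cofinite_atTop).norm
  have hg : Summable g :=
    summable_of_norm_le_of_tendsto (fun q ↦ norm_taylorCoeff_term_le a s q.1 q.2) h_diag
  have hgy : Summable fun q ↦ g q * y ^ q.1 :=
    summable_of_norm_le_of_tendsto
      (fun q ↦ (norm_mul_le_norm_left _ _).trans (norm_taylorCoeff_term_le a s q.1 q.2)) h_diag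
  have h_rows : HasSum (fun j ↦ taylorCoeff a s j * y ^ j) (∑' q, g q * y ^ q.1) :=
    hgy.hasSum.prod_fiberwise fun j ↦ (hg.prod_factor j).hasSum.mul_right (y ^ j)
  have h_antidiagonals : HasSum (fun n ↦ a n * (s + y) ^ n) (∑' q, g q * y ^ q.1) := by
    refine ((Finset.HasAntidiagonal.sigmaAntidiagonalEquivProd.hasSum_iff).2 hgy.hasSum).sigma
      fun n ↦ ?_
    rw [mul_add_pow_eq_sum_antidiagonal, ← Finset.sum_coe_sort]
    exact hasSum_fintype _
  rwa [← h_antidiagonals.tsum_eq] at h_rows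

lemma tsum_mul_pow_ne_zero_of_norm_lt {e : ℕ → ℤ_[p]} {y : ℤ_[p]}
    (he : Summable fun j ↦ e j * y ^ j) (hy : ‖y‖ < ‖e 0‖) : ∑' j, e j * y ^ j ≠ 0 := by
  have h_tail : ‖∑' j, e (j + 1) * y ^ (j + 1)‖ ≤ ‖y‖ :=
    IsUltrametricDist.norm_tsum_le_of_forall_le_of_nonneg (norm_nonneg y) fun j ↦ by
      rw [pow_succ, ← mul_assoc]
      exact norm_mul_le_norm_right _ _
  rw [he.tsum_eq_zero_add, pow_zero, mul_one]
  intro h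
  rw [eq_neg_of_add_eq_zero_left h, norm_neg] at hy
  linarith

lemma eventually_nhdsNE_zero_tsum_mul_pow_ne_zero {d : ℕ → ℤ_[p]}
    (hd : Tendsto d atTop (𝓝 0)) (hne : ∃ j, d j ≠ 0) :
    ∀ᶠ y in 𝓝[≠] 0, ∑' j, d j * y ^ j ≠ 0 := by
  classical
  set m := Nat.find hne
  have h_low : ∀ j < m, d j = 0 := fun j hj ↦ not_not.1 (Nat.find_min hne hj)
  have h_pos : 0 < ‖d m‖ := norm_pos_iff.2 (Nat.find_spec hne)
  have h_shift : Tendsto (fun j ↦ d (j + m)) atTop (𝓝 0) := hd.comp (tendsto_add_atTop_nat m)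
  filter_upwards [self_mem_nhdsWithin, nhdsWithin_le_nhds (Metric.ball_mem_nhds 0 h_pos)]
    with y hy0 hy
  have h_factor : ∑' j, d j * y ^ j = y ^ m * ∑' j, d (j + m) * y ^ j := by
    rw [← (summable_mul_pow hd y).sum_add_tsum_nat_add m,
      Finset.sum_eq_zero fun j hj ↦ by rw [h_low j (Finset.mem_range.1 hj), zero_mul], zero_add,
      ← (summable_mul_pow h_shift y).tsum_mul_left]
    congr 1 with j
    ring
  rw [h_factor]
  exact mul_ne_zero (pow_ne_zero m hy0)
    (tsum_mul_pow_ne_zero_of_norm_lt (summable_mul_pow h_shift y) (by simpa using hy))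

lemma exists_taylorCoeff_ne_zero {a : ℕ → ℤ_[p]} (ha : Tendsto a atTop (𝓝 0))
    (hne : ∃ i, a i ≠ 0) (s : ℤ_[p]) : ∃ j, taylorCoeff a s j ≠ 0 := by
  by_contra! hd
  obtain ⟨y, hy⟩ := (eventually_nhdsNE_zero_tsum_mul_pow_ne_zero ha hne).exists
  have h := hasSum_taylorCoeff_mul_pow ha s (y - s)
  simp only [hd, zero_mul, add_sub_cancel] at h
  exact hy (hasSum_zero.unique h).symm

lemma eventually_nhdsNE_tsum_mul_pow_ne_zero {a : ℕ → ℤ_[p]} (ha : Tendsto a atTop (𝓝 0))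
    (hne : ∃ i, a i ≠ 0) (s : ℤ_[p]) : ∀ᶠ x in 𝓝[≠] s, ∑' i, a i * x ^ i ≠ 0 := by
  have h_sub : Tendsto (fun x ↦ x - s) (𝓝[≠] s) (𝓝[≠] 0) :=
    tendsto_nhdsWithin_iff.2
      ⟨((continuous_sub_right s).tendsto' s 0 (sub_self s)).mono_left nhdsWithin_le_nhds,
        eventually_nhdsWithin_of_forall fun x hx ↦ sub_ne_zero.2 hx⟩
  filter_upwards [h_sub.eventually (eventually_nhdsNE_zero_tsum_mul_pow_ne_zero
    (tendsto_taylorCoeff ha s) (exists_taylorCoeff_ne_zero ha hne s))] with x hx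
  rwa [(hasSum_taylorCoeff_mul_pow ha s (x - s)).tsum_eq, add_sub_cancel] at hx

end PadicInt

/-- A nonzero restricted power series over `ℤ_p` has only finitely many zeros in `ℤ_p`. -/
theorem stmt_16 (p : ℕ) [Fact p.Prime] (a : ℕ → ℤ_[p])
    (ha : Tendsto a atTop (nhds 0)) (hfne : ∃ i, a i ≠ 0) :
    {x : ℤ_[p] | (∑' i : ℕ, a i * x ^ i) = 0}.Finite := by
  by_contra h_inf
  obtain ⟨s, hs⟩ := Set.Infinite.exists_accPt_principal h_inf
  exact accPt_iff_frequently_nhdsNE.1 hs (PadicInt.eventually_nhdsNE_tsum_mul_pow_ne_zero ha hfne s)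
end
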